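/- arXiv:2402.14633 — 5 statements merged into one kernel-verified Lean document; each statement's English description precedes it below -/
import Mathlib

section
/- Let T be a rooted tree with root r, and let V^s be a finite set of nodes of T. Sort the nodes of V^s as v_{i_1}, ..., v_{i_m} according to DFS traversal order (increasing entry time). Let V^lca = {LCA(u,v) : u, v ∈ V^s} and V^olca = {LCA(v_{i_j}, v_{i_{j+1}}) : 1 ≤ j ≤ m-1}. Then V^lca = V^s ∪ V^olca. -/
variable {V : Type} [Fintype V] [DecidableEq V]

/-- `u` is an ancestor of `v` in the tree `G` rooted at `root`:
`u` lies on the unique path from `root` to `v`. -/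
def isAncestor (G : SimpleGraph V) (root u v : V) : Prop :=
  G.dist root u + G.dist u v = G.dist root v

/-- `w` is the lowest common ancestor of `u` and `v`: a common ancestor such that
every common ancestor of `u` and `v` is an ancestor of `w`. -/
def isLCA (G : SimpleGraph V) (root u v w : V) : Prop :=
  isAncestor G root w u ∧ isAncestor G root w v ∧
    ∀ x, isAncestor G root x u → isAncestor G root x v → isAncestor G root x w

/-- `tin` is a DFS entry-time ordering of the tree `G` rooted at `root`:
distinct nodes get distinct times, ancestors are entered no later than their
descendants, and each subtree occupies a contiguous interval of entry times. -/
structure IsDFSOrder (G : SimpleGraph V) (root : V) (tin : V → ℕ) : Prop where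
  inj : Function.Injective tin
  anc_le : ∀ u v, isAncestor G root u v → tin u ≤ tin v
  interval : ∀ w x y z, isAncestor G root w x → isAncestor G root w z →
    tin x ≤ tin y → tin y ≤ tin z → isAncestor G root w y

/-!
Any three nodes `a, b, c` in DFS order satisfy `LCA(a,c) ∈ {LCA(a,b), LCA(b,c)}`: the
subtree of `LCA(a,c)` is an interval of entry times, so it contains `b`; hence `LCA(a,b)` and
`LCA(b,c)` both lie on the path from `LCA(a,c)` to `b`, and the higher of the two is a common
ancestor of `a` and `c`. Iterating this along the sorted list reduces the LCA of any two nodes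
to the LCA of a consecutive pair.
-/

section

omit [Fintype V] [DecidableEq V]

namespace SimpleGraph

variable {G : SimpleGraph V}

theorem IsTree.length_eq_dist_of_isPath (hG : G.IsTree) {u v : V} {p : G.Walk u v}
    (hp : p.IsPath) : p.length = G.dist u v := by
  obtain ⟨q, hq, hq_len⟩ := hG.connected.exists_path_of_dist u v
  rw [(hG.existsUnique_path u v).unique hp hq, hq_len]

theorem IsTree.dist_add_dist_of_mem_support (hG : G.IsTree) {u v x : V} {p : G.Walk u v}
    (hp : p.IsPath) (hx : x ∈ p.support) : G.dist u x + G.dist x v = G.dist u v := by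
  classical
  rw [← hG.length_eq_dist_of_isPath (hp.takeUntil hx),
    ← hG.length_eq_dist_of_isPath (hp.dropUntil hx), ← Walk.length_append, p.take_spec hx,
    hG.length_eq_dist_of_isPath hp]

theorem IsTree.mem_support_of_dist_add_dist (hG : G.IsTree) {u v x : V} {p : G.Walk u v}
    (hp : p.IsPath) (hx : G.dist u x + G.dist x v = G.dist u v) : x ∈ p.support := by
  obtain ⟨q, hq⟩ := hG.connected.exists_walk_length_eq_dist u x
  obtain ⟨r, hr⟩ := hG.connected.exists_walk_length_eq_dist x v
  have hqr : (q.append r).IsPath :=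
    Walk.isPath_of_length_eq_dist _ (by rw [Walk.length_append, hq, hr, hx])
  rw [(hG.existsUnique_path u v).unique hp hqr, Walk.mem_support_append_iff]
  exact Or.inl q.end_mem_support

end SimpleGraph

open SimpleGraph

section Ancestor

variable {G : SimpleGraph V} {root : V}

theorem isAncestor_refl (v : V) : isAncestor G root v v := by
  simp [isAncestor]

theorem isAncestor_antisymm (hG : G.IsTree) {x y : V} (hxy : isAncestor G root x y)
    (hyx : isAncestor G root y x) : x = y :=
  hG.connected.dist_eq_zero_iff.mp (by unfold isAncestor at hxy hyx; omega)

theorem isAncestor_trans (hG : G.IsTree) {x y z : V} (hxy : isAncestor G root x y)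
    (hyz : isAncestor G root y z) : isAncestor G root x z := by
  have h₁ : G.dist root z ≤ G.dist root x + G.dist x z := hG.connected.dist_triangle
  have h₂ : G.dist x z ≤ G.dist x y + G.dist y z := hG.connected.dist_triangle
  unfold isAncestor at *
  omega

theorem isAncestor_of_isAncestor_of_dist_le (hG : G.IsTree) {x y b : V}
    (hx : isAncestor G root x b) (hy : isAncestor G root y b)
    (hxy : G.dist root x ≤ G.dist root y) : isAncestor G root x y := by
  classical
  obtain ⟨p, hp, -⟩ := hG.connected.exists_path_of_dist root b
  have hyp : y ∈ p.support := hG.mem_support_of_dist_add_dist hp hy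
  have hxp : x ∈ p.support := hG.mem_support_of_dist_add_dist hp hx
  rw [← p.take_spec hyp, Walk.mem_support_append_iff] at hxp
  rcases hxp with hx_above | hx_below
  · exact hG.dist_add_dist_of_mem_support (hp.takeUntil hyp) hx_above
  · -- `x` lies between `y` and `b`, so it is at least as deep as `y`
    have hyxb := hG.dist_add_dist_of_mem_support (hp.dropUntil hyp) hx_below
    have hyx : y = x := hG.connected.dist_eq_zero_iff.mp (by unfold isAncestor at hx hy; omega)
    exact hyx ▸ isAncestor_refl y

end Ancestor

section LCA

variable {G : SimpleGraph V} {root : V} (hG : G.IsTree)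
include hG

theorem isLCA.eq_of_isAncestor {u v w x : V} (hw : isLCA G root u v w)
    (hxu : isAncestor G root x u) (hxv : isAncestor G root x v) (hwx : isAncestor G root w x) :
    x = w :=
  isAncestor_antisymm hG (hw.2.2 x hxu hxv) hwx

variable {lca : V → V → V} (hlca : ∀ u v, isLCA G root u v (lca u v))
include hlca

theorem lca_self (v : V) : lca v v = v :=
  (isLCA.eq_of_isAncestor hG (hlca v v) (isAncestor_refl v) (isAncestor_refl v)
    (hlca v v).1).symm

theorem lca_comm (u v : V) : lca u v = lca v u :=
  isLCA.eq_of_isAncestor hG (hlca v u) (hlca u v).2.1 (hlca u v).1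
    ((hlca u v).2.2 _ (hlca v u).2.1 (hlca v u).1)

theorem IsDFSOrder.lca_eq_or_lca_eq {tin : V → ℕ} (hdfs : IsDFSOrder G root tin)
    {a b c : V} (hab : tin a ≤ tin b) (hbc : tin b ≤ tin c) :
    lca a c = lca a b ∨ lca a c = lca b c := by
  obtain ⟨hza, hzc, -⟩ := hlca a c
  have hzb : isAncestor G root (lca a c) b := hdfs.interval _ a b c hza hzc hab hbc
  have hx : isAncestor G root (lca a b) b := (hlca a b).2.1
  have hy : isAncestor G root (lca b c) b := (hlca b c).1
  rcases le_total (G.dist root (lca a b)) (G.dist root (lca b c)) with hle | hle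
  · have hxy := isAncestor_of_isAncestor_of_dist_le hG hx hy hle
    exact .inl (isLCA.eq_of_isAncestor hG (hlca a c) (hlca a b).1
      (isAncestor_trans hG hxy (hlca b c).2.1) ((hlca a b).2.2 _ hza hzb)).symm
  · have hyx := isAncestor_of_isAncestor_of_dist_le hG hy hx hle
    exact .inr (isLCA.eq_of_isAncestor hG (hlca a c) (isAncestor_trans hG hyx (hlca a b).1)
      (hlca b c).2.1 ((hlca b c).2.2 _ hzb hzc)).symm

end LCA

end

theorem List.pair_getElem_mem_zip_tail {α : Type*} (l : List α) {k : ℕ} (hk : k + 1 < l.length) :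
    (l[k], l[k + 1]) ∈ l.zip l.tail :=
  List.mem_iff_getElem.mpr ⟨k, by simp only [List.length_zip, List.length_tail]; omega, by simp⟩

theorem List.Pairwise.apply_getElem_mem_map_zip_tail {α β : Type*} {R : α → α → Prop}
    {l : List α} (hl : l.Pairwise R) (f : α → α → β)
    (hf : ∀ a b c, R a b → R b c → f a c = f a b ∨ f a c = f b c)
    {i j : ℕ} (hij : i < j) (hj : j < l.length) :
    f l[i] l[j] ∈ (l.zip l.tail).map fun p => f p.1 p.2 := by
  induction j with
  | zero => omega
  | succ j ih =>
    have hconsec : f l[j] l[j + 1] ∈ (l.zip l.tail).map fun p => f p.1 p.2 :=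
      List.mem_map_of_mem (l.pair_getElem_mem_zip_tail hj)
    rcases Nat.lt_succ_iff_lt_or_eq.mp hij with hij | rfl
    · have hj' : j < l.length := by omega
      have hR := List.pairwise_iff_getElem.mp hl
      rcases hf _ _ _ (hR i j (by omega) hj' hij) (hR j (j + 1) hj' hj j.lt_succ_self) with h | h
      · exact h ▸ ih hij hj'
      · exact h ▸ hconsec
    · exact hconsec

theorem stmt0_general (G : SimpleGraph V) (hG : G.IsTree) (root : V) (tin : V → ℕ)
    (hdfs : IsDFSOrder G root tin)
    (lca : V → V → V) (hlca : ∀ u v, isLCA G root u v (lca u v))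
    (Vs : Finset V) (l : List V) (hl : l.toFinset = Vs)
    (hsort : l.Pairwise fun a b => tin a < tin b) :
    (Vs ×ˢ Vs).image (fun p => lca p.1 p.2) =
      Vs ∪ ((l.zip l.tail).map fun p => lca p.1 p.2).toFinset := by
  have hordered {i j : ℕ} (hij : i < j) (hj : j < l.length) :
      lca l[i] l[j] ∈ (l.zip l.tail).map fun p => lca p.1 p.2 :=
    hsort.apply_getElem_mem_map_zip_tail lca
      (fun _ _ _ hab hbc => hdfs.lca_eq_or_lca_eq hG hlca hab.le hbc.le) hij hj
  subst hl
  ext w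
  simp only [Finset.mem_image, Finset.mem_product, Finset.mem_union, List.mem_toFinset]
  constructor
  · rintro ⟨⟨u, v⟩, ⟨hu, hv⟩, rfl⟩
    obtain ⟨i, hi, rfl⟩ := List.getElem_of_mem hu
    obtain ⟨j, hj, rfl⟩ := List.getElem_of_mem hv
    rcases lt_trichotomy i j with hij | rfl | hji
    · exact .inr (hordered hij hj)
    · exact .inl (lca_self hG hlca _ ▸ hu)
    · exact .inr (lca_comm hG hlca _ _ ▸ hordered hji hi)
  · rintro (hw | hw)
    · exact ⟨(w, w), ⟨hw, hw⟩, lca_self hG hlca w⟩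
    · obtain ⟨⟨u, v⟩, huv, rfl⟩ := List.mem_map.mp hw
      exact ⟨(u, v), ⟨(List.of_mem_zip huv).1, List.tail_subset l (List.of_mem_zip huv).2⟩, rfl⟩

/-- for a set of nodes sorted in DFS order, the set of all pairwise
LCAs equals the union of the set itself with the LCAs of DFS-consecutive pairs. -/
theorem stmt0 (G : SimpleGraph V) (hG : G.IsTree) (root : V) (tin : V → ℕ)
    (hdfs : IsDFSOrder G root tin)
    (lca : V → V → V) (hlca : ∀ u v, isLCA G root u v (lca u v))
    (Vs : Finset V) (l : List V) (hl : l.toFinset = Vs) (hnd : l.Nodup)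
    (hsort : l.Pairwise fun a b => tin a < tin b) :
    (Vs ×ˢ Vs).image (fun p => lca p.1 p.2) =
      Vs ∪ ((l.zip l.tail).map fun p => lca p.1 p.2).toFinset :=
  stmt0_general G hG root tin hdfs lca hlca Vs l hl hsort
end

section
/- Let T be a rooted tree and V^s a finite nonempty set of nodes. Let V^lca = {LCA(u,v) : u, v ∈ V^s}. Then |V^s| ≤ |V^lca| ≤ 2·|V^s| - 1. -/
variable {V : Type} [Fintype V] [DecidableEq V]

/-!
Ancestors of a vertex `v` in a rooted tree all lie on the geodesic from the root to `v`, so they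
form a chain. Hence, if `v₀ ∈ S` maximises the depth of `lca u v₀`, then for every `b ∈ S` the
vertex `lca u b` is either `lca u v₀` or `lca v₀ b`: adding `u` to `S` creates at most the two new
LCAs `u = lca u u` and `lca u v₀`, and induction on `S` gives `|V^lca| ≤ 2|S| - 1`. The lower bound
is `lca v v = v`.
-/

section

omit [Fintype V] [DecidableEq V]

open SimpleGraph

variable {G : SimpleGraph V} {root : V}

theorem SimpleGraph.Walk.dist_getVert_le {u v : V} (p : G.Walk u v) {i j : ℕ} (hij : i ≤ j) :
    G.dist (p.getVert i) (p.getVert j) ≤ j - i := by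
  have h := (dist_le ((p.drop i).take (j - i))).trans (Walk.take_length _ _ ▸ inf_le_left)
  rwa [Walk.drop_getVert, Nat.add_sub_cancel' hij] at h

theorem isAncestor_getVert_of_length_eq_dist (hc : G.Connected) {v : V} (p : G.Walk root v)
    (hp : p.length = G.dist root v) {i j : ℕ} (hij : i ≤ j) (hj : j ≤ p.length) :
    isAncestor G root (p.getVert i) (p.getVert j) := by
  have hi : G.dist root (p.getVert i) ≤ i := by
    simpa [p.getVert_zero] using p.dist_getVert_le (Nat.zero_le i)
  have hij' := p.dist_getVert_le hij
  have hjv : G.dist (p.getVert j) v ≤ p.length - j := by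
    simpa [p.getVert_length] using p.dist_getVert_le hj
  have hj' : G.dist root (p.getVert j) ≤ j := by
    simpa [p.getVert_zero] using p.dist_getVert_le (Nat.zero_le j)
  have := hc.dist_triangle (u := root) (v := p.getVert i) (w := p.getVert j)
  have := hc.dist_triangle (u := root) (v := p.getVert j) (w := v)
  unfold isAncestor
  omega

theorem SimpleGraph.IsAcyclic.eq_of_length_eq_dist (hG : G.IsAcyclic) {u v : V}
    {p q : G.Walk u v} (hp : p.length = G.dist u v) (hq : q.length = G.dist u v) : p = q :=
  congrArg Subtype.val <|
    (hG.subsingleton_path u v).elim ⟨p, p.isPath_of_length_eq_dist hp⟩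
      ⟨q, q.isPath_of_length_eq_dist hq⟩

namespace isAncestor

theorem antisymm (hc : G.Connected) {u v : V} (huv : isAncestor G root u v)
    (hvu : isAncestor G root v u) : u = v := by
  unfold isAncestor at huv hvu
  exact hc.dist_eq_zero_iff.mp (by omega)

theorem trans (hc : G.Connected) {a b c : V} (hab : isAncestor G root a b)
    (hbc : isAncestor G root b c) : isAncestor G root a c := by
  unfold isAncestor at *
  have := hc.dist_triangle (u := a) (v := b) (w := c)
  have := hc.dist_triangle (u := root) (v := a) (w := c)
  omega

theorem eq_of_dist_le (hc : G.Connected) {x y : V} (hxy : isAncestor G root x y)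
    (hle : G.dist root y ≤ G.dist root x) : x = y := by
  unfold isAncestor at hxy
  exact hc.dist_eq_zero_iff.mp (by omega)

theorem getVert_dist_eq (hG : G.IsTree) {x v : V} (hx : isAncestor G root x v)
    (p : G.Walk root v) (hp : p.length = G.dist root v) : p.getVert (G.dist root x) = x := by
  obtain ⟨q₁, hq₁⟩ := hG.connected.exists_walk_length_eq_dist root x
  obtain ⟨q₂, hq₂⟩ := hG.connected.exists_walk_length_eq_dist x v
  have hq : q₁.append q₂ = p :=
    hG.isAcyclic.eq_of_length_eq_dist (by rw [Walk.length_append, hq₁, hq₂]; exact hx) hp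
  rw [← hq, Walk.getVert_append', if_pos hq₁.ge, ← hq₁, Walk.getVert_length]

/-- All ancestors of `v` lie on the unique geodesic from the root to `v`. -/
theorem total (hG : G.IsTree) {x y v : V} (hx : isAncestor G root x v)
    (hy : isAncestor G root y v) : isAncestor G root x y ∨ isAncestor G root y x := by
  obtain ⟨p, hp⟩ := hG.connected.exists_walk_length_eq_dist root v
  have hxp := hx.getVert_dist_eq hG p hp
  have hyp := hy.getVert_dist_eq hG p hp
  have hyv : G.dist root y ≤ p.length := by unfold isAncestor at hy; omega
  have hxv : G.dist root x ≤ p.length := by unfold isAncestor at hx; omega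
  rcases le_total (G.dist root x) (G.dist root y) with hxy | hyx
  · have h := isAncestor_getVert_of_length_eq_dist hG.connected p hp hxy hyv
    rw [hxp, hyp] at h
    exact Or.inl h
  · have h := isAncestor_getVert_of_length_eq_dist hG.connected p hp hyx hxv
    rw [hxp, hyp] at h
    exact Or.inr h

end isAncestor

namespace isLCA

variable {u v w w' : V}

theorem symm (h : isLCA G root u v w) : isLCA G root v u w :=
  ⟨h.2.1, h.1, fun x hxv hxu => h.2.2 x hxu hxv⟩

theorem unique (hc : G.Connected) (h : isLCA G root u v w) (h' : isLCA G root u v w') :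
    w = w' :=
  (h'.2.2 w h.1 h.2.1).antisymm hc (h.2.2 w' h'.1 h'.2.1)

theorem eq_of_self (hc : G.Connected) (h : isLCA G root v v w) : w = v :=
  h.1.antisymm hc (h.2.2 v (isAncestor_refl v) (isAncestor_refl v))

theorem eq_or_eq_of_dist_le (hG : G.IsTree) {b a c : V} (hub : isLCA G root u b a)
    (huv : isLCA G root u v w) (hvb : isLCA G root v b c)
    (hle : G.dist root a ≤ G.dist root w) : a = w ∨ a = c := by
  have hconn := hG.connected
  rcases hub.1.total hG huv.1 with haw | hwa
  · have hac : isAncestor G root a c := hvb.2.2 a (haw.trans hconn huv.2.1) hub.2.1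
    rcases hvb.1.total hG huv.2.1 with hcw | hwc
    · exact Or.inr (hac.antisymm hconn (hub.2.2 c (hcw.trans hconn huv.1) hvb.2.1))
    · exact Or.inl (haw.antisymm hconn (hub.2.2 w huv.1 (hwc.trans hconn hvb.2.1)))
  · exact Or.inl (hwa.eq_of_dist_le hconn hle).symm

end isLCA

end

section

omit [Fintype V]

open Finset

variable {G : SimpleGraph V} {root : V}

/-- The set `V^lca` of the paper, for `V^s = S`. -/
def lcaSet (lca : V → V → V) (S : Finset V) : Finset V :=
  (S ×ˢ S).image fun p => lca p.1 p.2

variable {lca : V → V → V}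

theorem lca_mem_lcaSet {S : Finset V} {a b : V} (ha : a ∈ S) (hb : b ∈ S) :
    lca a b ∈ lcaSet lca S :=
  mem_image_of_mem _ (mk_mem_product ha hb)

theorem subset_lcaSet (hc : G.Connected) (hlca : ∀ u v, isLCA G root u v (lca u v))
    (S : Finset V) : S ⊆ lcaSet lca S := fun v hv =>
  (hlca v v).eq_of_self hc ▸ lca_mem_lcaSet hv hv

theorem lcaSet_insert_subset (hG : G.IsTree) (hlca : ∀ u v, isLCA G root u v (lca u v))
    {S : Finset V} {u v₀ : V} (hv₀ : v₀ ∈ S)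
    (hmax : ∀ b ∈ S, G.dist root (lca u b) ≤ G.dist root (lca u v₀)) :
    lcaSet lca (insert u S) ⊆ insert u (insert (lca u v₀) (lcaSet lca S)) := by
  have hnew : ∀ b ∈ insert u S, lca u b ∈ insert u (insert (lca u v₀) (lcaSet lca S)) := by
    intro b hb
    rcases mem_insert.mp hb with rfl | hb
    · exact mem_insert.mpr (Or.inl ((hlca b b).eq_of_self hG.connected))
    rcases (hlca u b).eq_or_eq_of_dist_le hG (hlca u v₀) (hlca v₀ b) (hmax b hb) with h | h
    · rw [h]; exact mem_insert_of_mem (mem_insert_self _ _)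
    · rw [h]; exact mem_insert_of_mem (mem_insert_of_mem (lca_mem_lcaSet hv₀ hb))
  intro z hz
  obtain ⟨⟨a, b⟩, hab, rfl⟩ := mem_image.mp hz
  obtain ⟨ha, hb⟩ := mem_product.mp hab
  rcases mem_insert.mp ha with rfl | haS
  · exact hnew b hb
  rcases mem_insert.mp hb with rfl | hbS
  · rw [(hlca a b).unique hG.connected (hlca b a).symm]
    exact hnew a (mem_insert_of_mem haS)
  · exact mem_insert_of_mem (mem_insert_of_mem (lca_mem_lcaSet haS hbS))

theorem card_lcaSet_le (hG : G.IsTree) (hlca : ∀ u v, isLCA G root u v (lca u v))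
    {S : Finset V} (hS : S.Nonempty) : (lcaSet lca S).card ≤ 2 * S.card - 1 := by
  induction hS using Nonempty.cons_induction with
  | singleton v => simp [lcaSet]
  | cons u S hu hS ih =>
    rw [cons_eq_insert, card_insert_of_notMem hu]
    obtain ⟨v₀, hv₀, hmax⟩ := S.exists_max_image (fun b => G.dist root (lca u b)) hS
    calc (lcaSet lca (insert u S)).card
        ≤ (insert u (insert (lca u v₀) (lcaSet lca S))).card :=
          card_le_card (lcaSet_insert_subset hG hlca hv₀ hmax)
      _ ≤ (lcaSet lca S).card + 2 :=
          (card_insert_le _ _).trans (by grw [card_insert_le])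
      _ ≤ 2 * (S.card + 1) - 1 := by have := hS.card_pos; omega

end

/-- `|V^s| ≤ |V^lca| ≤ 2|V^s| - 1` for the set of pairwise LCAs. -/
theorem stmt1 (G : SimpleGraph V) (hG : G.IsTree) (root : V)
    (lca : V → V → V) (hlca : ∀ u v, isLCA G root u v (lca u v))
    (Vs : Finset V) (hne : Vs.Nonempty) :
    Vs.card ≤ ((Vs ×ˢ Vs).image fun p => lca p.1 p.2).card ∧
      ((Vs ×ˢ Vs).image fun p => lca p.1 p.2).card ≤ 2 * Vs.card - 1 :=
  ⟨Finset.card_le_card (subset_lcaSet hG.connected hlca Vs), card_lcaSet_le hG hlca hne⟩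
end

section
/- Let T be a rooted tree and S a finite set of nodes closed under pairwise LCA, with the virtual tree G on S (edges between u,v ∈ S with no other node of S strictly between them on the tree path, weighted by w(u,v) = dist_T(u,v)). Then for any two nodes u, v ∈ S, the weighted distance between u and v in G equals dist_T(u, v). -/
/-!
No walk in the virtual graph is lighter than `dist u v`, by the triangle inequality along the walk.
For a walk of exactly that weight, induct on `dist u v`: if no other node of `S` lies on a geodesic
from `u` to `v`, then `u` and `v` are adjacent in the virtual graph; otherwise such a node `x`
splits `dist u v` into two strictly smaller distances, and the two walks obtained by induction
concatenate to one of weight `dist u x + dist x v = dist u v`.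
-/

variable {V : Type} [Fintype V] [DecidableEq V]

/-- The virtual (compressed) tree of a set `S` of nodes of the tree `G`:
`u` and `v` are adjacent iff both are in `S` and no other node of `S` lies on
the tree path between them. -/
def virtGraph (G : SimpleGraph V) (S : Finset V) : SimpleGraph V :=
  SimpleGraph.fromRel fun u v =>
    u ∈ S ∧ v ∈ S ∧ ¬ ∃ x ∈ S, x ≠ u ∧ x ≠ v ∧ G.dist u x + G.dist x v = G.dist u v

/-- Total weight of a walk, where edge `{u,v}` has weight `wt u v`. -/
def walkWeight (wt : V → V → ℕ) {G' : SimpleGraph V} : {u v : V} → G'.Walk u v → ℕ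
  | _, _, SimpleGraph.Walk.nil => 0
  | _, _, @SimpleGraph.Walk.cons _ _ a x _ _ p => wt a x + walkWeight wt p

open SimpleGraph

section

omit [Fintype V] [DecidableEq V]

lemma walkWeight_append (wt : V → V → ℕ) {H : SimpleGraph V} {a b c : V}
    (p : H.Walk a b) (q : H.Walk b c) :
    walkWeight wt (p.append q) = walkWeight wt p + walkWeight wt q := by
  induction p with
  | nil => simp [walkWeight]
  | cons _ p ih => simp only [Walk.cons_append, walkWeight, ih, Nat.add_assoc]

lemma SimpleGraph.Connected.dist_le_walkWeight {G H : SimpleGraph V} (hG : G.Connected)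
    {u v : V} (p : H.Walk u v) : G.dist u v ≤ walkWeight G.dist p := by
  induction p with
  | nil => simp [walkWeight]
  | @cons a b c _ p ih =>
    calc G.dist a c ≤ G.dist a b + G.dist b c := hG.dist_triangle
      _ ≤ G.dist a b + walkWeight G.dist p := Nat.add_le_add_left ih _

lemma virtGraph_adj_of_not_between {G : SimpleGraph V} {S : Finset V} {u v : V}
    (huv : u ≠ v) (hu : u ∈ S) (hv : v ∈ S)
    (h : ¬ ∃ x ∈ S, x ≠ u ∧ x ≠ v ∧ G.dist u x + G.dist x v = G.dist u v) :
    (virtGraph G S).Adj u v := by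
  simp only [virtGraph, fromRel_adj]
  exact ⟨huv, Or.inl ⟨hu, hv, h⟩⟩

lemma SimpleGraph.Connected.exists_virtGraph_walk_weight_eq_dist {G : SimpleGraph V}
    (hG : G.Connected) {S : Finset V} {u v : V} (hu : u ∈ S) (hv : v ∈ S) :
    ∃ p : (virtGraph G S).Walk u v, walkWeight G.dist p = G.dist u v := by
  induction hd : G.dist u v using Nat.strong_induction_on generalizing u v with
  | _ n ih =>
    subst hd
    by_cases huv : u = v
    · subst huv
      exact ⟨.nil, by simp [walkWeight]⟩
    by_cases hbetween : ∃ x ∈ S, x ≠ u ∧ x ≠ v ∧ G.dist u x + G.dist x v = G.dist u v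
    · obtain ⟨x, hxS, hxu, hxv, hsum⟩ := hbetween
      have hux_pos : 0 < G.dist u x := hG.pos_dist_of_ne (Ne.symm hxu)
      have hxv_pos : 0 < G.dist x v := hG.pos_dist_of_ne hxv
      obtain ⟨p, hp⟩ := ih _ (by omega) hu hxS rfl
      obtain ⟨q, hq⟩ := ih _ (by omega) hxS hv rfl
      exact ⟨p.append q, by rw [walkWeight_append, hp, hq, hsum]⟩
    · exact ⟨.cons (virtGraph_adj_of_not_between huv hu hv hbetween) .nil, by simp [walkWeight]⟩

end

theorem stmt12_general (G : SimpleGraph V) (hG : G.IsTree)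
    (S : Finset V)
    (u v : V) (hu : u ∈ S) (hv : v ∈ S) :
    (∃ p : (virtGraph G S).Walk u v, walkWeight G.dist p = G.dist u v) ∧
      ∀ p : (virtGraph G S).Walk u v, G.dist u v ≤ walkWeight G.dist p :=
  ⟨hG.connected.exists_virtGraph_walk_weight_eq_dist hu hv,
    fun p => hG.connected.dist_le_walkWeight p⟩

/-- in the virtual tree of an LCA-closed set (edges weighted by
tree distance), the weighted distance between two nodes of `S` equals their
tree distance: some walk achieves it and no walk is lighter. -/
theorem stmt12 (G : SimpleGraph V) (hG : G.IsTree) (root : V)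
    (lca : V → V → V) (hlca : ∀ u v, isLCA G root u v (lca u v))
    (S : Finset V) (hclosed : ∀ u ∈ S, ∀ v ∈ S, lca u v ∈ S)
    (u v : V) (hu : u ∈ S) (hv : v ∈ S) :
    (∃ p : (virtGraph G S).Walk u v, walkWeight G.dist p = G.dist u v) ∧
      ∀ p : (virtGraph G S).Walk u v, G.dist u v ≤ walkWeight G.dist p :=
  stmt12_general G hG S u v hu hv
end

section
/- Let T be a rooted tree, S an LCA-closed set of nodes sorted in DFS order, and v the currently processed node in the stack-based virtual-tree construction. After popping all stack elements that are not ancestors of v, if the stack is nonempty then its top element u is an ancestor of v and no element of S already processed lies strictly between u and v on the tree path. -/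
variable {V : Type} [Fintype V] [DecidableEq V]

attribute [local instance] Classical.propDecidable

/-- Pop all nodes from the top of the stack (head of the list) that are not
ancestors of `v`. -/
noncomputable def popStack (anc : V → V → Prop) (v : V) : List V → List V
  | [] => []
  | u :: st => if anc u v then u :: st else popStack anc v st

/-- Process the nodes of a list in order: pop non-ancestors of the current node,
then push the current node. The head of the list is the top of the stack. -/
noncomputable def runStack (anc : V → V → Prop) : List V → List V → List V
  | [], st => st
  | v :: rest, st => runStack anc rest (v :: popStack anc v st)


/-! The stack is always a chain of ancestors, topmost deepest. A processed node `x` that is an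
ancestor of a later node `y` is never popped before `y` arrives: every node `w` processed in
between satisfies `tin x ≤ tin w ≤ tin y`, so `w` lies in the subtree of `x` and `x` is an
ancestor of `w` too. Hence, when `v` is processed, every processed ancestor of `v` survives the
popping, and the surviving stack is a chain below its top `u`; a processed node strictly between
`u` and `v` would be an ancestor of `v` lying above `u` and below `u` at once. -/

section Ancestor

variable {α : Type} {G : SimpleGraph α} {r : α}

theorem isAncestor_refl_s15 (u : α) : isAncestor G r u u := by
  simp [isAncestor]

theorem isAncestor_trans_s15 (hc : G.Connected) {a b c : α}
    (hab : isAncestor G r a b) (hbc : isAncestor G r b c) : isAncestor G r a c := by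
  unfold isAncestor at *
  have := hc.dist_triangle (u := a) (v := b) (w := c)
  have := hc.dist_triangle (u := r) (v := a) (w := c)
  omega

theorem isAncestor_antisymm_s15 (hc : G.Connected) {a b : α}
    (hab : isAncestor G r a b) (hba : isAncestor G r b a) : a = b := by
  unfold isAncestor at *
  exact hc.dist_eq_zero_iff.mp (by omega)

theorem isAncestor_of_dist_add_eq (hc : G.Connected) {u x v : α} (huv : isAncestor G r u v)
    (hx : G.dist u x + G.dist x v = G.dist u v) :
    isAncestor G r u x ∧ isAncestor G r x v := by
  unfold isAncestor at *
  have := hc.dist_triangle (u := r) (v := u) (w := x)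
  have := hc.dist_triangle (u := r) (v := x) (w := v)
  omega

theorem IsDFSOrder.isAncestor_of_tin_le {tin : α → ℕ} (hdfs : IsDFSOrder G r tin) {x y z : α}
    (hxz : isAncestor G r x z) (hxy : tin x ≤ tin y) (hyz : tin y ≤ tin z) :
    isAncestor G r x y :=
  hdfs.interval x x y z (isAncestor_refl_s15 x) hxz hxy hyz

end Ancestor

section Stack

variable {α : Type} {anc : α → α → Prop} {v : α}

theorem popStack_suffix (st : List α) : popStack anc v st <:+ st := by
  induction st with
  | nil => simp [popStack]
  | cons a st ih =>
    rw [popStack]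
    split_ifs
    · exact List.suffix_refl _
    · exact ih.trans (List.suffix_cons a st)

theorem mem_popStack_of_mem {st : List α} {x : α} (hx : x ∈ st) (hxv : anc x v) :
    x ∈ popStack anc v st := by
  induction st with
  | nil => simp at hx
  | cons a st ih =>
    rw [popStack]
    split_ifs with hav
    · exact hx
    · rcases List.mem_cons.mp hx with rfl | hx
      · exact absurd hxv hav
      · exact ih hx

theorem isAncestor_of_mem_popStack (htrans : ∀ a b c, anc a b → anc b c → anc a c)
    {st : List α} (hst : st.Pairwise fun a b => anc b a) {x : α}
    (hx : x ∈ popStack anc v st) : anc x v := by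
  induction st with
  | nil => simp [popStack] at hx
  | cons a st ih =>
    rw [popStack] at hx
    split_ifs at hx with hav
    · rcases List.mem_cons.mp hx with rfl | hx
      · exact hav
      · exact htrans _ _ _ (List.rel_of_pairwise_cons hst hx) hav
    · exact ih hst.of_cons hx

theorem runStack_append_singleton (l : List α) (w : α) (st : List α) :
    runStack anc (l ++ [w]) st = w :: popStack anc w (runStack anc l st) := by
  induction l generalizing st with
  | nil => rfl
  | cons a l ih => exact ih _

theorem runStack_pairwise (htrans : ∀ a b c, anc a b → anc b c → anc a c) (l : List α) :
    (runStack anc l []).Pairwise fun a b => anc b a := by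
  induction l using List.reverseRecOn with
  | nil => simp [runStack]
  | append_singleton l w ih =>
    rw [runStack_append_singleton]
    exact List.pairwise_cons.mpr
      ⟨fun _ hx => isAncestor_of_mem_popStack htrans ih hx, ih.sublist (popStack_suffix _).sublist⟩

end Stack

theorem mem_runStack_of_isAncestor {α : Type} {G : SimpleGraph α} {r : α} {tin : α → ℕ}
    (hdfs : IsDFSOrder G r tin) (l : List α) (hl : l.Pairwise fun a b => tin a < tin b)
    {x y : α} (hx : x ∈ l) (hxy : isAncestor G r x y) (hly : ∀ z ∈ l, tin z < tin y) :
    x ∈ runStack (isAncestor G r) l [] := by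
  induction l using List.reverseRecOn generalizing y with
  | nil => simp at hx
  | append_singleton l w ih =>
    rw [runStack_append_singleton]
    obtain ⟨hl, -, hlw⟩ := List.pairwise_append.mp hl
    rcases List.mem_append.mp hx with hx | hx
    · have hxw : isAncestor G r x w := hdfs.isAncestor_of_tin_le hxy
        (hlw x hx w (List.mem_singleton_self w)).le (hly w (by simp)).le
      refine List.mem_cons_of_mem w (mem_popStack_of_mem (ih hl hx hxw ?_) hxw)
      exact fun z hz => hlw z hz w (List.mem_singleton_self w)
    · rw [List.mem_singleton.mp hx]
      exact List.mem_cons_self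

theorem stmt15_general (G : SimpleGraph V) (hG : G.IsTree) (root : V) (tin : V → ℕ)
    (hdfs : IsDFSOrder G root tin)
    (l : List V)
    (hsort : l.Pairwise fun a b => tin a < tin b)
    (l1 : List V) (v : V) (l2 : List V) (hsplit : l = l1 ++ v :: l2) :
    ∀ u, (popStack (isAncestor G root) v (runStack (isAncestor G root) l1 [])).head?
        = some u →
      isAncestor G root u v ∧
        ¬ ∃ x ∈ l1, x ≠ u ∧ x ≠ v ∧ G.dist u x + G.dist x v = G.dist u v := by
  intro u hu
  have hc : G.Connected := hG.connected
  have htrans : ∀ a b c : V, isAncestor G root a b → isAncestor G root b c →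
      isAncestor G root a c := fun _ _ _ => isAncestor_trans_s15 hc
  obtain ⟨hsort1, -, hlt⟩ := List.pairwise_append.mp (hsplit ▸ hsort)
  obtain ⟨t, hpop⟩ := List.head?_eq_some_iff.mp hu
  have hstack := runStack_pairwise htrans l1
  have hchain : (u :: t).Pairwise fun a b => isAncestor G root b a :=
    hpop ▸ hstack.sublist (popStack_suffix _).sublist
  have huv : isAncestor G root u v :=
    isAncestor_of_mem_popStack htrans hstack (hpop ▸ List.mem_cons_self)
  refine ⟨huv, ?_⟩
  rintro ⟨x, hx, hxu, -, hdist⟩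
  obtain ⟨hux, hxv⟩ := isAncestor_of_dist_add_eq hc huv hdist
  have hxst := mem_popStack_of_mem
    (mem_runStack_of_isAncestor hdfs l1 hsort1 hx hxv fun z hz => hlt z hz v List.mem_cons_self) hxv
  rcases List.mem_cons.mp (hpop ▸ hxst) with rfl | hxt
  · exact hxu rfl
  · exact hxu (isAncestor_antisymm_s15 hc hux (List.rel_of_pairwise_cons hchain hxt)).symm

/-- when processing `v`, after popping all non-ancestors of `v`,
if the stack is nonempty then its top `u` is an ancestor of `v` and no
already-processed node lies strictly between `u` and `v` on the tree path. -/
theorem stmt15 (G : SimpleGraph V) (hG : G.IsTree) (root : V) (tin : V → ℕ)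
    (hdfs : IsDFSOrder G root tin)
    (lca : V → V → V) (hlca : ∀ u v, isLCA G root u v (lca u v))
    (l : List V) (hnd : l.Nodup)
    (hsort : l.Pairwise fun a b => tin a < tin b)
    (hclosed : ∀ u ∈ l, ∀ v ∈ l, lca u v ∈ l)
    (l1 : List V) (v : V) (l2 : List V) (hsplit : l = l1 ++ v :: l2) :
    ∀ u, (popStack (isAncestor G root) v (runStack (isAncestor G root) l1 [])).head?
        = some u →
      isAncestor G root u v ∧
        ¬ ∃ x ∈ l1, x ≠ u ∧ x ≠ v ∧ G.dist u x + G.dist x v = G.dist u v :=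
  stmt15_general G hG root tin hdfs l hsort l1 v l2 hsplit
end

section
/- Consider the k-server problem on a tree T where servers at nodes v_1, ..., v_k serve a request at node q by repeated phases: in each phase, every active server (one with no other server on its path to q) moves one step toward q, until some server reaches q. Then the server that reaches q is one at minimal initial distance to q among all servers, and the number of phases equals min_i dist(v_i, q). -/
variable {V : Type} [Fintype V] [DecidableEq V]

attribute [local instance] Classical.propDecidable

/-- Server `i` is active in configuration `c` for query `q`: no other server lies
strictly on its path to `q`, and among servers sharing its node it has minimal index. -/
def isActive (G : SimpleGraph V) (q : V) {k : ℕ} (c : Fin k → V) (i : Fin k) : Prop :=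
  (∀ j, c j = c i → i ≤ j) ∧
    ∀ j, c j ≠ c i → ¬ (G.dist (c i) (c j) + G.dist (c j) q = G.dist (c i) q)

/-!
While the closest servers are not yet at `q`, the one of smallest index at a closest node is active:
nobody lies strictly between it and `q`, since anyone there would be closer still. Hence each phase
lowers the minimum distance to `q` by exactly one, whereas no server gets closer by more than one per
phase. So the minimum reaches `0` after exactly `D` phases, and a server at `q` at that moment has
moved in every phase, starting at distance `D`.
-/

section

omit [Fintype V] [DecidableEq V]

variable {G : SimpleGraph V} {q : V} {stepTo : V → V} {k : ℕ}

noncomputable def phase (G : SimpleGraph V) (q : V) (stepTo : V → V) (x : Fin k → V) : Fin k → V :=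
  fun i => if isActive G q x i then stepTo (x i) else x i

lemma dist_stepTo_eq_sub_one (hstep : ∀ v, v ≠ q → G.dist (stepTo v) q + 1 = G.dist v q)
    (hstepq : stepTo q = q) (v : V) : G.dist (stepTo v) q = G.dist v q - 1 := by
  by_cases hv : v = q
  · simp [hv, hstepq]
  · have := hstep v hv
    omega

lemma dist_le_dist_phase_add_one (hstep : ∀ v, v ≠ q → G.dist (stepTo v) q + 1 = G.dist v q)
    (hstepq : stepTo q = q) (x : Fin k → V) (i : Fin k) :
    G.dist (x i) q ≤ G.dist (phase G q stepTo x i) q + 1 := by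
  unfold phase
  split_ifs
  · have := dist_stepTo_eq_sub_one hstep hstepq (x i)
    omega
  · omega

lemma isActive_of_isLeast (hG : G.Connected) {x : Fin k → V} {i : Fin k}
    (hleast : IsLeast (Set.range fun j => G.dist (x j) q) (G.dist (x i) q))
    (hindex : ∀ j, x j = x i → i ≤ j) : isActive G q x i := by
  refine ⟨hindex, fun j hne hbetween => ?_⟩
  have hpos : 0 < G.dist (x i) (x j) := hG.pos_dist_of_ne (Ne.symm hne)
  have hfar : G.dist (x i) q ≤ G.dist (x j) q := hleast.2 ⟨j, rfl⟩
  omega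

lemma exists_isActive_of_isLeast (hG : G.Connected) {x : Fin k → V} {d : ℕ}
    (hd : IsLeast (Set.range fun j => G.dist (x j) q) d) :
    ∃ i, isActive G q x i ∧ G.dist (x i) q = d := by
  obtain ⟨⟨i₀, hi₀⟩, hlow⟩ := hd
  obtain ⟨i, hi, hmin⟩ := (Finset.univ.filter fun j => x j = x i₀).exists_min_image id
    ⟨i₀, by simp⟩
  replace hi : x i = x i₀ := by simpa using hi
  have hdi : G.dist (x i) q = d := hi ▸ hi₀
  refine ⟨i, isActive_of_isLeast hG (hdi ▸ ⟨⟨i₀, hi₀⟩, hlow⟩) fun j hj => ?_, hdi⟩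
  exact hmin j (by simp [hj, hi])

lemma isLeast_dist_phase (hG : G.Connected)
    (hstep : ∀ v, v ≠ q → G.dist (stepTo v) q + 1 = G.dist v q) (hstepq : stepTo q = q)
    {x : Fin k → V} {d : ℕ} (hd : IsLeast (Set.range fun j => G.dist (x j) q) d) :
    IsLeast (Set.range fun j => G.dist (phase G q stepTo x j) q) (d - 1) := by
  obtain ⟨i, hactive, hi⟩ := exists_isActive_of_isLeast hG hd
  refine ⟨⟨i, ?_⟩, ?_⟩
  · simp only [phase, if_pos hactive, dist_stepTo_eq_sub_one hstep hstepq, hi]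
  · rintro _ ⟨j, rfl⟩
    have hmoved := dist_le_dist_phase_add_one hstep hstepq x j
    have hfar : d ≤ G.dist (x j) q := hd.2 ⟨j, rfl⟩
    dsimp only
    omega

variable {c : ℕ → Fin k → V}

lemma isLeast_dist_iterate (hG : G.Connected)
    (hstep : ∀ v, v ≠ q → G.dist (stepTo v) q + 1 = G.dist v q) (hstepq : stepTo q = q)
    (hdyn : ∀ t, c (t + 1) = phase G q stepTo (c t)) {D : ℕ}
    (hD : IsLeast (Set.range fun i => G.dist (c 0 i) q) D) (t : ℕ) :
    IsLeast (Set.range fun i => G.dist (c t i) q) (D - t) := by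
  induction t with
  | zero => exact hD
  | succ t ih => exact hdyn t ▸ isLeast_dist_phase hG hstep hstepq ih

lemma dist_le_dist_iterate_add (hstep : ∀ v, v ≠ q → G.dist (stepTo v) q + 1 = G.dist v q)
    (hstepq : stepTo q = q) (hdyn : ∀ t, c (t + 1) = phase G q stepTo (c t)) (t : ℕ)
    (i : Fin k) : G.dist (c 0 i) q ≤ G.dist (c t i) q + t := by
  induction t with
  | zero => rfl
  | succ t ih =>
    have := dist_le_dist_phase_add_one hstep hstepq (c t) i
    rw [← hdyn] at this
    omega

end

theorem stmt16_general (G : SimpleGraph V) (hG : G.IsTree) (q : V) {k : ℕ}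
    (stepTo : V → V)
    (hstep : ∀ v, v ≠ q → G.Adj v (stepTo v) ∧ G.dist (stepTo v) q + 1 = G.dist v q)
    (hstepq : stepTo q = q)
    (c : ℕ → Fin k → V)
    (hdyn : ∀ t i, c (t + 1) i = if isActive G q (c t) i then stepTo (c t i) else c t i)
    (D : ℕ) (hD : IsLeast {d | ∃ i, G.dist (c 0 i) q = d} D) :
    (∃ i, c D i = q) ∧ (∀ i, c D i = q → G.dist (c 0 i) q = D) ∧
      ∀ t < D, ∀ i, c t i ≠ q := by
  have hconn := hG.connected
  have hstep' v hv := (hstep v hv).2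
  have hphase t : c (t + 1) = phase G q stepTo (c t) := funext (hdyn t)
  have hleast := isLeast_dist_iterate hconn hstep' hstepq hphase hD
  refine ⟨?_, fun i hi => ?_, fun t ht i hi => ?_⟩
  · obtain ⟨i, hi⟩ := (hleast D).1
    exact ⟨i, hconn.dist_eq_zero_iff.mp (by simpa using hi)⟩
  · have hmoved := dist_le_dist_iterate_add hstep' hstepq hphase D i
    have hfar : D ≤ G.dist (c 0 i) q := hD.2 ⟨i, rfl⟩
    rw [hi, SimpleGraph.dist_self] at hmoved
    omega
  · have hfar : D - t ≤ G.dist (c t i) q := (hleast t).2 ⟨i, rfl⟩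
    rw [hi, SimpleGraph.dist_self] at hfar
    omega

/-- in the phase-based process where every active server moves one
step towards `q`, the first server reaches `q` after exactly `D = min_i dist(v_i,q)`
phases, and any server at `q` at that moment started at minimal distance `D`. -/
theorem stmt16 (G : SimpleGraph V) (hG : G.IsTree) (q : V) {k : ℕ} (hk : 0 < k)
    (stepTo : V → V)
    (hstep : ∀ v, v ≠ q → G.Adj v (stepTo v) ∧ G.dist (stepTo v) q + 1 = G.dist v q)
    (hstepq : stepTo q = q)
    (c : ℕ → Fin k → V)
    (hdyn : ∀ t i, c (t + 1) i = if isActive G q (c t) i then stepTo (c t i) else c t i)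
    (D : ℕ) (hD : IsLeast {d | ∃ i, G.dist (c 0 i) q = d} D) :
    (∃ i, c D i = q) ∧ (∀ i, c D i = q → G.dist (c 0 i) q = D) ∧
      ∀ t < D, ∀ i, c t i ≠ q :=
  stmt16_general G hG q stepTo hstep hstepq c hdyn D hD
end
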